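/- In the Hilbert flying saucer X with induced length metric d, let x_n = 2^{n-1/2}(e_{2^n} + e_{2^n+1}), so that ‖x_n‖ = 2^n and x_n ∈ X. Then for all i ≤ j one has (x_i | x_j)_0 ≥ 2^i (1 - 1/√2); in particular (x_n) is a Gromov sequence in X and the Gromov boundary of X is nonempty. -/

import Mathlib

/-- `ℓ²`, the Hilbert space of square-summable real sequences. -/
noncomputable abbrev ell2 : Type := lp (fun _ : ℕ => ℝ) 2

/-- The disk `Y_i` (here indexed from `0`, so `saucerY i` is the paper's `Y_{i+1}`):
elements of norm at most `i+1` whose first `i` coordinates vanish. -/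
def saucerY (i : ℕ) : Set ell2 :=
  {x : ell2 | ‖x‖ ≤ (i : ℝ) + 1 ∧ ∀ j < i, x j = 0}

/-- The Hilbert flying saucer `X = ⋃ᵢ Yᵢ ⊆ ℓ²`. -/
def saucer : Set ell2 := ⋃ i : ℕ, saucerY i

/-- The induced length (inner) metric on a subset `X` of a normed space: the infimum of
lengths (total variations) of continuous paths in `X` joining `u` to `v`. -/
noncomputable def lengthDist {E : Type*} [NormedAddCommGroup E] [NormedSpace ℝ E]
    (X : Set E) (u v : E) : ENNReal :=
  ⨅ (γ : ℝ → E) (_ : ContinuousOn γ (Set.Icc 0 1)) (_ : γ 0 = u) (_ : γ 1 = v)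
    (_ : Set.MapsTo γ (Set.Icc 0 1) X), eVariationOn γ (Set.Icc 0 1)

open Filter

/-- The sequence `x n = 2^{n - 1/2}(e_{2^n} + e_{2^n+1})` in `ℓ²`.  (Coordinates are
indexed from 0 here, so `e_k` is `lp.single 2 k 1`.) -/
noncomputable def xseq (n : ℕ) : ell2 :=
  ((2 : ℝ) ^ n / Real.sqrt 2) •
    (lp.single 2 (2 ^ n) (1 : ℝ) + lp.single 2 (2 ^ n + 1) (1 : ℝ))

/-! The segment from `x_n` to `0` lies in a single disk of `X`, so `d(x_n, 0) = 2^n`. For `i ≤ j`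
the point `q = 2^{i-j} x_j` lies in a common disk with `x_i` and in one with `x_j`. Since `q` and
`x_i` have equal norms and nonnegative coordinates, `‖x_i - q‖ ≤ √2 · 2^i`, and the radial segment
from `q` to `x_j` has length `2^j - 2^i`; hence `d(x_i, x_j) ≤ 2^j + (√2 - 1) 2^i`, which is the
bound `(x_i | x_j)_0 ≥ 2^i (1 - 1/√2)`. -/

open Set AffineMap RealInnerProductSpace

section LengthDist

variable {E : Type*} [NormedAddCommGroup E] [NormedSpace ℝ E] {X : Set E} {u v w : E}

theorem eVariationOn_lineMap_comp_le (u v : E) {φ : ℝ → ℝ} {a b : ℝ} (hφ : MonotoneOn φ (Icc a b))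
    (hab : a ≤ b) :
    eVariationOn (lineMap u v ∘ φ) (Icc a b) ≤ ENNReal.ofReal (dist u v * (φ b - φ a)) := by
  have hvar := hφ.eVariationOn_eq (left_mem_Icc.2 hab) (right_mem_Icc.2 hab)
  rw [inter_self] at hvar
  calc eVariationOn (lineMap u v ∘ φ) (Icc a b)
      ≤ nndist u v * eVariationOn φ (Icc a b) :=
        (lipschitzWith_lineMap u v).lipschitzOnWith.comp_eVariationOn_le (mapsTo_univ _ _)
    _ = ENNReal.ofReal (dist u v * (φ b - φ a)) := by
        rw [hvar, ENNReal.ofReal_mul dist_nonneg, ← edist_nndist, edist_dist]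

theorem lengthDist_le_eVariationOn {γ : ℝ → E} (hγ : ContinuousOn γ (Icc 0 1)) (h0 : γ 0 = u)
    (h1 : γ 1 = v) (hX : MapsTo γ (Icc 0 1) X) :
    lengthDist X u v ≤ eVariationOn γ (Icc 0 1) :=
  iInf_le_of_le γ <| iInf_le_of_le hγ <| iInf_le_of_le h0 <| iInf_le_of_le h1 <| iInf_le _ hX

theorem edist_le_lengthDist (X : Set E) (u v : E) : edist u v ≤ lengthDist X u v :=
  le_iInf fun γ => le_iInf fun _ => le_iInf fun h0 => le_iInf fun h1 => le_iInf fun _ => by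
    rw [← h0, ← h1]
    exact eVariationOn.edist_le γ (left_mem_Icc.2 zero_le_one) (right_mem_Icc.2 zero_le_one)

theorem lengthDist_comm (X : Set E) (u v : E) : lengthDist X u v = lengthDist X v u := by
  suffices h : ∀ u v : E, lengthDist X v u ≤ lengthDist X u v from le_antisymm (h v u) (h u v)
  intro u v
  refine le_iInf fun γ => le_iInf fun hγ => le_iInf fun h0 => le_iInf fun h1 => le_iInf fun hX => ?_
  have hrev : MapsTo (fun t : ℝ => 1 - t) (Icc 0 1) (Icc 0 1) := fun t ht =>
    ⟨by linarith [ht.2], by linarith [ht.1]⟩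
  refine (lengthDist_le_eVariationOn (γ := γ ∘ fun t => 1 - t)
    (hγ.comp (by fun_prop) hrev) (by simp [h1]) (by simp [h0]) (hX.comp hrev)).trans ?_
  exact eVariationOn.comp_le_of_antitoneOn γ _ (fun s _ t _ hst => by linarith) hrev

theorem lengthDist_le_of_segment_subset (h : segment ℝ u v ⊆ X) :
    lengthDist X u v ≤ ENNReal.ofReal (dist u v) := by
  refine (lengthDist_le_eVariationOn (lineMap_continuous (p := u) (q := v)).continuousOn
    (lineMap_apply_zero u v) (lineMap_apply_one u v) ?_).trans ?_
  · rw [segment_eq_image_lineMap] at h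
    exact fun t ht => h (mem_image_of_mem _ ht)
  · simpa using eVariationOn_lineMap_comp_le u v (φ := id) monotoneOn_id zero_le_one

theorem lengthDist_eq_of_segment_subset (h : segment ℝ u v ⊆ X) :
    lengthDist X u v = edist u v :=
  le_antisymm ((lengthDist_le_of_segment_subset h).trans_eq (edist_dist u v).symm)
    (edist_le_lengthDist X u v)

theorem lengthDist_le_add_of_segment_subset (huw : segment ℝ u w ⊆ X)
    (hwv : segment ℝ w v ⊆ X) :
    lengthDist X u v ≤ ENNReal.ofReal (dist u w + dist w v) := by
  set γ₁ : ℝ → E := lineMap u w ∘ fun t => 2 * t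
  set γ₂ : ℝ → E := lineMap w v ∘ fun t => 2 * t - 1
  set γ : ℝ → E := fun t => if t ≤ 1 / 2 then γ₁ t else γ₂ t with hγ
  have hγ₁ : EqOn γ γ₁ (Icc 0 (1 / 2)) := fun t ht => if_pos ht.2
  have hγ₂ : EqOn γ γ₂ (Icc (1 / 2) 1) := fun t ht => by
    rcases ht.1.eq_or_lt with rfl | hlt
    · norm_num [hγ, γ₁, γ₂]
    · exact if_neg (not_le.2 hlt)
  have hcont : Continuous γ :=
    Continuous.if_le (by fun_prop) (by fun_prop) continuous_id continuous_const
      fun t ht => by norm_num [ht, γ₁, γ₂]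
  have hX : MapsTo γ (Icc 0 1) X := by
    rw [segment_eq_image_lineMap] at huw hwv
    intro t ht
    by_cases h : t ≤ 1 / 2
    · rw [hγ₁ ⟨ht.1, h⟩]
      exact huw (mem_image_of_mem _ ⟨by linarith [ht.1], by linarith⟩)
    · rw [hγ₂ ⟨by linarith, ht.2⟩]
      exact hwv (mem_image_of_mem _ ⟨by linarith, by linarith [ht.2]⟩)
  have hvar₁ : eVariationOn γ (Icc 0 (1 / 2)) ≤ ENNReal.ofReal (dist u w) := by
    rw [eVariationOn.eq_of_eqOn hγ₁]
    simpa using eVariationOn_lineMap_comp_le u w (φ := fun t => 2 * t)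
      (fun s _ t _ hst => by linarith) (by norm_num : (0 : ℝ) ≤ 1 / 2)
  have hvar₂ : eVariationOn γ (Icc (1 / 2) 1) ≤ ENNReal.ofReal (dist w v) := by
    rw [eVariationOn.eq_of_eqOn hγ₂]
    convert eVariationOn_lineMap_comp_le w v (φ := fun t => 2 * t - 1)
      (fun s _ t _ hst => by linarith) (by norm_num : (1 / 2 : ℝ) ≤ 1) using 2
    norm_num
  calc lengthDist X u v ≤ eVariationOn γ (Icc 0 1) :=
        lengthDist_le_eVariationOn hcont.continuousOn (by norm_num [hγ, γ₁])
          (by norm_num [hγ, γ₂]) hX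
    _ = eVariationOn γ (Icc 0 (1 / 2)) + eVariationOn γ (Icc (1 / 2) 1) := by
        simpa using (eVariationOn.Icc_add_Icc γ (s := univ) (by norm_num : (0 : ℝ) ≤ 1 / 2)
          (by norm_num) (mem_univ _)).symm
    _ ≤ ENNReal.ofReal (dist u w) + ENNReal.ofReal (dist w v) := add_le_add hvar₁ hvar₂
    _ = ENNReal.ofReal (dist u w + dist w v) := (ENNReal.ofReal_add dist_nonneg dist_nonneg).symm

noncomputable def gromovProduct (X : Set E) (u v : E) : ℝ :=
  ((lengthDist X u 0).toReal + (lengthDist X v 0).toReal - (lengthDist X u v).toReal) / 2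

theorem gromovProduct_comm (X : Set E) (u v : E) : gromovProduct X u v = gromovProduct X v u := by
  rw [gromovProduct, gromovProduct, add_comm (lengthDist X u 0).toReal, lengthDist_comm X u v]

end LengthDist

theorem norm_sub_le_sqrt_two_mul_of_inner_nonneg {F : Type*} [NormedAddCommGroup F]
    [InnerProductSpace ℝ F] {x y : F} (hxy : 0 ≤ ⟪x, y⟫) (hnorm : ‖x‖ = ‖y‖) :
    ‖x - y‖ ≤ √2 * ‖x‖ := by
  rw [← pow_le_pow_iff_left₀ (norm_nonneg _) (by positivity) two_ne_zero, mul_pow,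
    Real.sq_sqrt zero_le_two, norm_sub_sq_real, ← hnorm]
  linarith

theorem lp.real_inner_nonneg {ι : Type*} {f g : lp (fun _ : ι => ℝ) 2} (hf : ∀ i, 0 ≤ f i)
    (hg : ∀ i, 0 ≤ g i) : 0 ≤ ⟪f, g⟫ := by
  rw [lp.inner_eq_tsum]
  exact tsum_nonneg fun i => mul_nonneg (hg i) (hf i)

theorem convex_saucerY (i : ℕ) : Convex ℝ (saucerY i) := by
  rintro x ⟨hx, hx0⟩ y ⟨hy, hy0⟩ a b ha hb hab
  refine ⟨?_, fun j hj => ?_⟩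
  · calc ‖a • x + b • y‖ ≤ a * ‖x‖ + b * ‖y‖ := by
          simpa only [norm_smul_of_nonneg ha x, norm_smul_of_nonneg hb y] using
            norm_add_le (a • x) (b • y)
      _ ≤ a * (i + 1) + b * (i + 1) := by gcongr
      _ = i + 1 := by rw [← add_mul, hab, one_mul]
  · simp only [lp.coeFn_add, lp.coeFn_smul, Pi.add_apply, Pi.smul_apply, hx0 j hj, hy0 j hj,
      smul_zero, add_zero]

theorem segment_subset_saucer {i : ℕ} {x y : ell2} (hx : x ∈ saucerY i) (hy : y ∈ saucerY i) :
    segment ℝ x y ⊆ saucer :=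
  ((convex_saucerY i).segment_subset hx hy).trans (subset_iUnion _ i)

theorem xseq_apply (n k : ℕ) :
    xseq n k = 2 ^ n / √2 * ((if k = 2 ^ n then 1 else 0) + if k = 2 ^ n + 1 then 1 else 0) := by
  rw [xseq, lp.coeFn_smul, lp.coeFn_add, Pi.smul_apply, Pi.add_apply, lp.single_apply,
    lp.single_apply, smul_eq_mul]
  simp only [Pi.single_apply]

theorem xseq_apply_of_lt {n k : ℕ} (hk : k < 2 ^ n) : xseq n k = 0 := by
  rw [xseq_apply, if_neg (by omega), if_neg (by omega), add_zero, mul_zero]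

theorem xseq_apply_nonneg (n k : ℕ) : 0 ≤ xseq n k := by
  rw [xseq_apply]
  positivity

theorem norm_xseq (n : ℕ) : ‖xseq n‖ = 2 ^ n := by
  have hsum : ‖(lp.single 2 (2 ^ n) (1 : ℝ) + lp.single 2 (2 ^ n + 1) 1 : ell2)‖ = √2 := by
    rw [← Real.sqrt_sq (norm_nonneg _), norm_add_sq_real, lp.norm_single, lp.norm_single,
      lp.inner_single_left]
    · norm_num [lp.single_apply]
    all_goals norm_num
  rw [xseq, norm_smul, hsum, Real.norm_of_nonneg (by positivity)]
  field_simp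

theorem smul_xseq_mem_saucerY {m n : ℕ} (hmn : m ≤ n) {c : ℝ} (hc : 0 ≤ c)
    (hcn : c * 2 ^ n ≤ 2 ^ m) : c • xseq n ∈ saucerY (2 ^ m) := by
  refine ⟨?_, fun k hk => ?_⟩
  · rw [norm_smul_of_nonneg hc, norm_xseq]
    push_cast
    linarith
  · have hk' : k < 2 ^ n := hk.trans_le (Nat.pow_le_pow_right two_pos hmn)
    simp [xseq_apply_of_lt hk']

theorem xseq_mem_saucerY (n : ℕ) : xseq n ∈ saucerY (2 ^ n) := by
  simpa using smul_xseq_mem_saucerY le_rfl zero_le_one (by rw [one_mul])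

theorem lengthDist_saucer_xseq_zero (n : ℕ) :
    lengthDist saucer (xseq n) 0 = ENNReal.ofReal (2 ^ n) := by
  have h0 : (0 : ell2) ∈ saucerY (2 ^ n) := by
    simpa using smul_xseq_mem_saucerY le_rfl le_rfl (n := n) (c := 0) (by simp)
  rw [lengthDist_eq_of_segment_subset (segment_subset_saucer (xseq_mem_saucerY n) h0),
    edist_dist, dist_zero_right, norm_xseq]

theorem lengthDist_saucer_xseq_le {i j : ℕ} (hij : i ≤ j) :
    lengthDist saucer (xseq i) (xseq j) ≤ ENNReal.ofReal (√2 * 2 ^ i + (2 ^ j - 2 ^ i)) := by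
  have hpow : (2 : ℝ) ^ i ≤ 2 ^ j := pow_le_pow_right₀ one_le_two hij
  set c : ℝ := 2 ^ i / 2 ^ j
  have hc : 0 ≤ c := by positivity
  have hcj : c * 2 ^ j = 2 ^ i := div_mul_cancel₀ _ (by positivity)
  set q : ell2 := c • xseq j
  have hq : ‖q‖ = 2 ^ i := by rw [norm_smul_of_nonneg hc, norm_xseq, hcj]
  have hiq : dist (xseq i) q ≤ √2 * 2 ^ i := by
    have hinner : 0 ≤ ⟪xseq i, q⟫ := lp.real_inner_nonneg (xseq_apply_nonneg i) fun k => by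
      simpa [q] using mul_nonneg hc (xseq_apply_nonneg j k)
    rw [dist_eq_norm, ← norm_xseq i]
    exact norm_sub_le_sqrt_two_mul_of_inner_nonneg hinner (by rw [hq, norm_xseq])
  have hqj : dist q (xseq j) = 2 ^ j - 2 ^ i := by
    have hsub : xseq j - q = (1 - c) • xseq j := by rw [sub_smul, one_smul]
    rw [dist_comm, dist_eq_norm, hsub, norm_smul_of_nonneg, norm_xseq]
    · rw [sub_mul, one_mul, hcj]
    · rw [sub_nonneg, div_le_one (by positivity)]
      exact hpow
  have hiq_seg := segment_subset_saucer (xseq_mem_saucerY i) (smul_xseq_mem_saucerY hij hc hcj.le)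
  have hqj_seg := segment_subset_saucer (smul_xseq_mem_saucerY le_rfl hc (hcj.trans_le hpow))
    (xseq_mem_saucerY j)
  exact (lengthDist_le_add_of_segment_subset hiq_seg hqj_seg).trans
    (ENNReal.ofReal_le_ofReal (add_le_add hiq hqj.le))

theorem two_pow_mul_le_gromovProduct_xseq {i j : ℕ} (hij : i ≤ j) :
    2 ^ i * (1 - 1 / √2) ≤ gromovProduct saucer (xseq i) (xseq j) := by
  have hpow : (2 : ℝ) ^ i ≤ 2 ^ j := pow_le_pow_right₀ one_le_two hij
  have hdist := ENNReal.toReal_le_of_le_ofReal (add_nonneg (by positivity) (sub_nonneg.2 hpow))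
    (lengthDist_saucer_xseq_le hij)
  have hsqrt : 1 / √2 = √2 / 2 := by field_simp; simp
  rw [gromovProduct, lengthDist_saucer_xseq_zero, lengthDist_saucer_xseq_zero,
    ENNReal.toReal_ofReal (by positivity), ENNReal.toReal_ofReal (by positivity), hsqrt]
  linarith

theorem two_pow_min_mul_le_gromovProduct_xseq (i j : ℕ) :
    2 ^ min i j * (1 - 1 / √2) ≤ gromovProduct saucer (xseq i) (xseq j) := by
  rcases le_total i j with hij | hji
  · rw [min_eq_left hij]
    exact two_pow_mul_le_gromovProduct_xseq hij
  · rw [min_eq_right hji, gromovProduct_comm]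
    exact two_pow_mul_le_gromovProduct_xseq hji

/-- Each `x n` lies in the flying saucer and has norm `2^n`; for `i ≤ j` the Gromov
product (for the induced length metric `d`, basepoint `0`) satisfies
`(x_i | x_j)_0 ≥ 2^i (1 - 1/√2)`; in particular `(x n)` is a Gromov sequence in `X`,
so the Gromov boundary of `X` is nonempty. -/
theorem stmt_13 :
    (∀ n : ℕ, xseq n ∈ saucer ∧ ‖xseq n‖ = 2 ^ n) ∧
    (∀ i j : ℕ, i ≤ j →
      (2 : ℝ) ^ i * (1 - 1 / Real.sqrt 2) ≤
        ((lengthDist saucer (xseq i) 0).toReal + (lengthDist saucer (xseq j) 0).toReal -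
          (lengthDist saucer (xseq i) (xseq j)).toReal) / 2) ∧
    Tendsto
      (fun p : ℕ × ℕ =>
        ((lengthDist saucer (xseq p.1) 0).toReal + (lengthDist saucer (xseq p.2) 0).toReal -
          (lengthDist saucer (xseq p.1) (xseq p.2)).toReal) / 2)
      atTop atTop := by
  refine ⟨fun n => ⟨subset_iUnion _ _ (xseq_mem_saucerY n), norm_xseq n⟩,
    fun i j hij => two_pow_mul_le_gromovProduct_xseq hij, ?_⟩
  have hc : 0 < 1 - 1 / √2 := sub_pos.2 ((div_lt_one (by positivity)).2 Real.one_lt_sqrt_two)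
  have hmin : Tendsto (fun p : ℕ × ℕ => min p.1 p.2) atTop atTop :=
    tendsto_atTop_atTop.2 fun b => ⟨(b, b), fun p hp => le_min hp.1 hp.2⟩
  exact tendsto_atTop_mono (fun p => two_pow_min_mul_le_gromovProduct_xseq p.1 p.2)
    (((tendsto_pow_atTop_atTop_of_one_lt one_lt_two).comp hmin).atTop_mul_const hc)
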